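/- arXiv:1803.08658 — 2 statements merged into one kernel-verified Lean document; each statement's English description precedes it below -/
import Mathlib

section
/- For any connected simple graph G of order n that is not a tree, and any real x < 0, P'(G, x)/P(G, x) > 1/x + (n−1)/(x−1). -/
open Polynomial

/-- `P` is the chromatic polynomial of `G`: for every natural number `k`,
`P` evaluated at `k` equals the number of proper `k`-colorings of `G`. -/
def IsChromPoly {W : Type*} (G : SimpleGraph W) (P : Polynomial ℝ) : Prop :=
  ∀ k : ℕ, P.eval (k : ℝ) = (Nat.card (G.Coloring (Fin k)) : ℝ)

/-!
Write `t_n(x) = 1/x + (n-1)/(x-1)` (`treeLogDeriv n x`), the logarithmic derivative of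
`x (x-1)^(n-1)`, which is the chromatic polynomial of every tree on `n` vertices. For an edge
`uv`, deletion–contraction gives `P(G) = P(G - uv) - P(G / uv)`, where `G / uv` is `G - uv` with
`v` identified with `u` (`identify`). By induction on the number of edges,
`(-1)^n P(G, x) > 0` for `x < 0`, so `P(G - uv, x)` and `P(G / uv, x)` have opposite signs, and a
mediant inequality shows that `P'/P` of `G` exceeds `c` as soon as `P'/P` of `G - uv` is `≥ c`
and `P'/P` of `G / uv` is `> c`.

For connected `G` this yields `t_n(x) ≤ P'(G, x)/P(G, x)` by induction on the number of edges:
trees give equality, and otherwise `G` has an edge `uv` that is not a bridge, so `G - uv` (on `n`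
vertices) and `G / uv` (on `n - 1` vertices) are connected, and `t_n(x) < t_(n-1)(x)`. The same
step gives the strict inequality as soon as `G` has a cycle.
-/

lemma lt_sub_div_sub_of_mul_neg {p q p' q' c : ℝ} (hpq : p * q < 0) (hp : c ≤ p' / p)
    (hq : c < q' / q) : c < (p' - q') / (p - q) := by
  rcases mul_neg_iff.mp hpq with ⟨hp0, hq0⟩ | ⟨hp0, hq0⟩
  · rw [le_div_iff₀ hp0] at hp
    rw [lt_div_iff_of_neg hq0] at hq
    rw [lt_div_iff₀ (by linarith)]
    linarith
  · rw [le_div_iff_of_neg hp0] at hp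
    rw [lt_div_iff₀ hq0] at hq
    rw [lt_div_iff_of_neg (by linarith)]
    linarith

noncomputable def treeLogDeriv (n : ℕ) (x : ℝ) : ℝ := 1 / x + ((n : ℝ) - 1) / (x - 1)

lemma treeLogDeriv_succ_lt (n : ℕ) {x : ℝ} (hx : x < 1) :
    treeLogDeriv (n + 1) x < treeLogDeriv n x := by
  have hpos : 0 < 1 / (1 - x) := one_div_pos.mpr (by linarith)
  have hdiff : treeLogDeriv n x - treeLogDeriv (n + 1) x = 1 / (1 - x) := by
    unfold treeLogDeriv
    field_simp [sub_ne_zero.mpr hx.ne, sub_ne_zero.mpr hx.ne']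
    push_cast
    ring
  linarith

lemma X_sub_one_mul_derivative_X_sub_one_pow (m : ℕ) :
    (X - 1 : ℝ[X]) * derivative ((X - 1) ^ m) = C (m : ℝ) * (X - 1) ^ m := by
  cases m with
  | zero => simp
  | succ m =>
    rw [derivative_pow, Nat.add_sub_cancel, derivative_sub, derivative_X, derivative_one, sub_zero,
      mul_one, pow_succ]
    ring

lemma eval_derivative_div_eval_X_mul_X_sub_one_pow (m : ℕ) {x : ℝ} (hx0 : x ≠ 0)
    (hx1 : x ≠ 1) :
    (derivative (X * (X - 1) ^ m)).eval x / (X * (X - 1) ^ m : ℝ[X]).eval x =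
      1 / x + m / (x - 1) := by
  have key := congrArg (eval x) (X_sub_one_mul_derivative_X_sub_one_pow m)
  simp only [eval_mul, eval_sub, eval_X, eval_one, eval_C, eval_pow] at key
  have hx1' : x - 1 ≠ 0 := sub_ne_zero.mpr hx1
  rw [derivative_mul, derivative_X, one_mul]
  simp only [eval_add, eval_mul, eval_X, eval_pow, eval_sub, eval_one]
  field_simp
  linear_combination x * key

namespace SimpleGraph

universe u

variable {V W α : Type*}

lemma card_compl_singleton_add_one [Finite V] (v : V) :
    Nat.card ({v}ᶜ : Set V) + 1 = Nat.card V := by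
  rw [Nat.card_coe_set_eq, ← Set.ncard_singleton v, Set.ncard_compl_add_ncard]

lemma ncard_edgeSet_map_le [Finite V] (G : SimpleGraph V) (f : V → W) :
    (G.map f).edgeSet.ncard ≤ G.edgeSet.ncard := by
  have hsub : (G.map f).edgeSet ⊆ Sym2.map f '' G.edgeSet := by
    intro e he
    induction e using Sym2.ind with
    | _ a b =>
      obtain ⟨-, a', b', hadj, rfl, rfl⟩ := he
      exact ⟨s(a', b'), hadj, rfl⟩
  exact (Set.ncard_le_ncard hsub (G.edgeSet.toFinite.image _)).trans
    (Set.ncard_image_le G.edgeSet.toFinite)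

lemma ncard_edgeSet_deleteEdges_lt [Finite V] {G : SimpleGraph V} {u v : V} (hadj : G.Adj u v) :
    (G.deleteEdges {s(u, v)}).edgeSet.ncard < G.edgeSet.ncard := by
  rw [edgeSet_deleteEdges]
  exact Set.ncard_sdiff_singleton_lt_of_mem hadj

lemma exists_adj_not_isBridge_of_not_isAcyclic {G : SimpleGraph V} (h : ¬ G.IsAcyclic) :
    ∃ u v, G.Adj u v ∧ ¬ G.IsBridge s(u, v) := by
  simpa [isAcyclic_iff_forall_adj_isBridge] using h

open Classical in
noncomputable def mergeMap {u v : V} (huv : u ≠ v) (x : V) : ({v}ᶜ : Set V) :=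
  if hx : x = v then ⟨u, huv⟩ else ⟨x, hx⟩

noncomputable def identify (G : SimpleGraph V) {u v : V} (huv : u ≠ v) :
    SimpleGraph ({v}ᶜ : Set V) :=
  G.map (mergeMap huv)

section Identify

variable {G : SimpleGraph V} {u v : V} (huv : u ≠ v)

lemma mergeMap_surjective : Function.Surjective (mergeMap huv) :=
  fun w => ⟨w, dif_neg w.2⟩

lemma mergeMap_eq_mergeMap_iff {a b : V} :
    mergeMap huv a = mergeMap huv b ↔ a = b ∨ s(a, b) = s(u, v) := by
  unfold mergeMap
  split_ifs <;> grind [Subtype.ext_iff, Sym2.eq_iff]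

lemma mergeMap_ne_of_adj (h : ¬ G.Adj u v) {a b : V} (hab : G.Adj a b) :
    mergeMap huv a ≠ mergeMap huv b := by
  rw [Ne, mergeMap_eq_mergeMap_iff]
  rintro (rfl | he)
  · exact hab.ne rfl
  · exact h (by rwa [← G.mem_edgeSet, ← he])

lemma Connected.identify (h : ¬ G.Adj u v) (hG : G.Connected) : (G.identify huv).Connected :=
  hG.map (Hom.map _ G (mergeMap_ne_of_adj huv h)) (mergeMap_surjective huv)

end Identify

section Coloring

variable {G : SimpleGraph V}

def coloringBotEquiv : (⊥ : SimpleGraph V).Coloring α ≃ (V → α) where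
  toFun c := c
  invFun f := Coloring.mk f fun h => h.elim
  left_inv _ := rfl
  right_inv _ := rfl

lemma card_coloring_bot [Finite V] :
    Nat.card ((⊥ : SimpleGraph V).Coloring α) = Nat.card α ^ Nat.card V := by
  rw [Nat.card_congr coloringBotEquiv, Nat.card_fun]

def coloringEquivDeleteEdges {u v : V} (hadj : G.Adj u v) :
    G.Coloring α ≃ {c : (G.deleteEdges {s(u, v)}).Coloring α // c u ≠ c v} where
  toFun c := ⟨c.comp (Hom.ofLE (G.deleteEdges_le _)), c.valid hadj⟩
  invFun c := Coloring.mk c.1 fun {a b} hab => by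
    by_cases he : s(a, b) = s(u, v)
    · rcases Sym2.eq_iff.mp he with ⟨rfl, rfl⟩ | ⟨rfl, rfl⟩
      exacts [c.2, c.2.symm]
    · exact c.1.valid (deleteEdges_adj.mpr ⟨hab, he⟩)
  left_inv _ := rfl
  right_inv _ := rfl

noncomputable def coloringMapEquiv {f : V → W} (hf : f.Surjective)
    (hG : ∀ ⦃a b⦄, G.Adj a b → f a ≠ f b) :
    (G.map f).Coloring α ≃ {c : G.Coloring α // ∀ a b, f a = f b → c a = c b} where
  toFun c := ⟨c.comp (Hom.map f G fun h => hG h), fun _ _ h => congrArg c h⟩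
  invFun c := Coloring.mk (c.1 ∘ Function.surjInv hf) fun {_ _} ⟨_, a', b', hab, ha, hb⟩ => by
    subst ha hb
    simpa only [Function.comp_apply, c.2 _ _ (Function.surjInv_eq hf _)] using c.1.valid hab
  left_inv c := DFunLike.ext _ _ fun w => congrArg c (Function.surjInv_eq hf w)
  right_inv c := Subtype.ext <| DFunLike.ext _ _ fun a => c.2 _ _ (Function.surjInv_eq hf (f a))

noncomputable def coloringIdentifyEquiv {u v : V} (huv : u ≠ v) (h : ¬ G.Adj u v) :
    (G.identify huv).Coloring α ≃ {c : G.Coloring α // c u = c v} :=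
  (coloringMapEquiv (mergeMap_surjective huv) fun _ _ => mergeMap_ne_of_adj huv h).trans <|
    Equiv.subtypeEquivRight fun c => by
      simp only [mergeMap_eq_mergeMap_iff]
      refine ⟨fun hc => hc u v (Or.inr rfl), fun hc a b => ?_⟩
      rintro (rfl | he)
      · rfl
      · rcases Sym2.eq_iff.mp he with ⟨rfl, rfl⟩ | ⟨rfl, rfl⟩
        exacts [hc, hc.symm]

theorem card_coloring_deleteEdges [Finite V] [Finite α] {u v : V} (hadj : G.Adj u v) :
    Nat.card ((G.deleteEdges {s(u, v)}).Coloring α) =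
      Nat.card (G.Coloring α) +
        Nat.card (((G.deleteEdges {s(u, v)}).identify hadj.ne).Coloring α) := by
  classical
  have hnadj : ¬ (G.deleteEdges {s(u, v)}).Adj u v := by simp
  rw [Nat.card_congr (coloringEquivDeleteEdges hadj),
    Nat.card_congr (coloringIdentifyEquiv hadj.ne hnadj), add_comm, ← Nat.card_sum]
  exact Nat.card_congr
    (Equiv.sumCompl fun c : (G.deleteEdges {s(u, v)}).Coloring α => c u = c v).symm

open Classical in
noncomputable def coloringEquivSigmaOfLeaf {v w : V} (hw : G.Adj v w)
    (hleaf : ∀ b, G.Adj v b → b = w) :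
    G.Coloring α ≃ Σ c : (G.induce {v}ᶜ).Coloring α, {a : α // a ≠ c ⟨w, hw.ne'⟩} where
  toFun c := ⟨c.comp (Embedding.induce _).toHom, c v, c.valid hw⟩
  invFun p := Coloring.mk (fun x => if hx : x = v then p.2.1 else p.1 ⟨x, hx⟩)
    fun {a b} hab => by
      by_cases ha : a = v
      · subst ha
        obtain rfl := hleaf b hab
        simpa [hw.ne'] using p.2.2
      · by_cases hb : b = v
        · subst hb
          obtain rfl := hleaf a hab.symm
          simpa [ha] using p.2.2.symm
        · simpa only [dif_neg ha, dif_neg hb] using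
            p.1.valid (show (G.induce {v}ᶜ).Adj ⟨a, ha⟩ ⟨b, hb⟩ from hab)
  left_inv c := DFunLike.ext _ _ fun x => by
    by_cases hx : x = v <;> simp [Coloring.mk, hx]
  right_inv p := Sigma.subtype_ext
    (DFunLike.ext _ _ fun x => by simp [Coloring.mk, Set.mem_compl_singleton_iff.mp x.2])
    (by simp [Coloring.mk])

theorem card_coloring_of_leaf [Finite V] [Finite α] {v w : V} (hw : G.Adj v w)
    (hleaf : ∀ b, G.Adj v b → b = w) :
    Nat.card (G.Coloring α) = Nat.card ((G.induce {v}ᶜ).Coloring α) * (Nat.card α - 1) := by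
  classical
  have := Fintype.ofFinite ((G.induce {v}ᶜ).Coloring α)
  have := Fintype.ofFinite α
  rw [Nat.card_congr (coloringEquivSigmaOfLeaf hw hleaf), Nat.card_sigma]
  simp [Finset.sum_const, Nat.card_eq_fintype_card]

theorem card_coloring_of_isTree [Finite V] [Finite α] {T : SimpleGraph V} (hT : T.IsTree) :
    Nat.card (T.Coloring α) = Nat.card α * (Nat.card α - 1) ^ (Nat.card V - 1) := by
  induction hn : Nat.card V generalizing V with
  | zero => exact absurd hn (Nat.card_pos_iff.mpr ⟨hT.1.nonempty, inferInstance⟩).ne'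
  | succ n ih =>
    classical
    rcases subsingleton_or_nontrivial V with hV | hV
    · obtain rfl : T = ⊥ := by ext a b; simp [Subsingleton.elim a b]
      have : Nat.card V = 1 := Nat.card_eq_one_iff_unique.mpr ⟨hV, hT.1.nonempty⟩
      obtain rfl : n = 0 := by omega
      rw [card_coloring_bot, this, pow_one, Nat.sub_self, pow_zero, mul_one]
    · have := Fintype.ofFinite V
      obtain ⟨v, hv⟩ := hT.exists_vert_degree_one_of_nontrivial
      obtain ⟨w, hw, hleaf⟩ := degree_eq_one_iff_existsUnique_adj.mp hv
      have hT' : (T.induce {v}ᶜ).IsTree :=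
        ⟨hT.1.induce_compl_singleton_of_degree_eq_one hv, hT.2.induce _⟩
      have hcard := card_compl_singleton_add_one v
      have hn1 : 1 ≤ n := by have := Finite.one_lt_card (α := V); omega
      rw [card_coloring_of_leaf hw hleaf, ih hT' (by omega), mul_assoc, ← pow_succ,
        Nat.sub_add_cancel hn1, Nat.add_sub_cancel]

end Coloring

theorem deleteEdges_identify_induction
    {motive : ∀ (V : Type u) [Finite V], SimpleGraph V → Prop}
    (bot : ∀ (V : Type u) [Finite V], motive V ⊥)
    (step : ∀ (V : Type u) [Finite V] (G : SimpleGraph V) (u v : V) (hadj : G.Adj u v),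
      motive V (G.deleteEdges {s(u, v)}) →
        motive ({v}ᶜ : Set V) ((G.deleteEdges {s(u, v)}).identify hadj.ne) → motive V G)
    (V : Type u) [Finite V] (G : SimpleGraph V) : motive V G := by
  induction hm : G.edgeSet.ncard using Nat.strong_induction_on generalizing V with
  | _ m ih =>
    rcases eq_or_ne G ⊥ with rfl | hG
    · exact bot V
    obtain ⟨u, v, hadj⟩ := ne_bot_iff_exists_adj.mp hG
    have hD := hm ▸ ncard_edgeSet_deleteEdges_lt hadj
    exact step V G u v hadj (ih _ hD V _ rfl)
      (ih _ ((ncard_edgeSet_map_le _ _).trans_lt hD) _ _ rfl)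

theorem _root_.IsChromPoly.unique {G : SimpleGraph V} {P Q : ℝ[X]} (hP : IsChromPoly G P)
    (hQ : IsChromPoly G Q) : P = Q :=
  eq_of_infinite_eval_eq P Q <| (Set.infinite_range_of_injective Nat.cast_injective).mono <| by
    rintro _ ⟨k, rfl⟩
    exact (hP k).trans (hQ k).symm

lemma isChromPoly_bot [Finite V] : IsChromPoly (⊥ : SimpleGraph V) (X ^ Nat.card V) := fun k => by
  simp [card_coloring_bot]

lemma isChromPoly_of_isTree [Finite V] {T : SimpleGraph V} (hT : T.IsTree) :
    IsChromPoly T (X * (X - 1) ^ (Nat.card V - 1)) := fun k => by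
  rw [card_coloring_of_isTree hT]
  rcases k with _ | k <;> simp

lemma _root_.IsChromPoly.sub_of_adj [Finite V] {G : SimpleGraph V} {u v : V} (hadj : G.Adj u v)
    {P Q : ℝ[X]} (hP : IsChromPoly (G.deleteEdges {s(u, v)}) P)
    (hQ : IsChromPoly ((G.deleteEdges {s(u, v)}).identify hadj.ne) Q) : IsChromPoly G (P - Q) :=
  fun k => by
    rw [eval_sub, hP k, hQ k, card_coloring_deleteEdges hadj]
    push_cast
    ring

theorem exists_isChromPoly [Finite V] (G : SimpleGraph V) : ∃ P, IsChromPoly G P :=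
  deleteEdges_identify_induction (motive := fun _ _ G => ∃ P, IsChromPoly G P)
    (fun _ _ => ⟨_, isChromPoly_bot⟩)
    (fun _ _ _ _ _ hadj ⟨_, hP⟩ ⟨_, hQ⟩ => ⟨_, hP.sub_of_adj hadj hQ⟩) V G

noncomputable def chromaticPolynomial [Finite V] (G : SimpleGraph V) : ℝ[X] :=
  (exists_isChromPoly G).choose

section ChromaticPolynomial

variable [Finite V] {G : SimpleGraph V}

lemma isChromPoly_chromaticPolynomial : IsChromPoly G G.chromaticPolynomial :=
  (exists_isChromPoly G).choose_spec

lemma _root_.IsChromPoly.eq_chromaticPolynomial {P : ℝ[X]} (hP : IsChromPoly G P) :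
    P = G.chromaticPolynomial :=
  hP.unique isChromPoly_chromaticPolynomial

lemma chromaticPolynomial_bot : (⊥ : SimpleGraph V).chromaticPolynomial = X ^ Nat.card V :=
  isChromPoly_bot.eq_chromaticPolynomial.symm

lemma chromaticPolynomial_of_isTree (hT : G.IsTree) :
    G.chromaticPolynomial = X * (X - 1) ^ (Nat.card V - 1) :=
  (isChromPoly_of_isTree hT).eq_chromaticPolynomial.symm

lemma chromaticPolynomial_eq_sub {u v : V} (hadj : G.Adj u v) :
    G.chromaticPolynomial = (G.deleteEdges {s(u, v)}).chromaticPolynomial -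
      ((G.deleteEdges {s(u, v)}).identify hadj.ne).chromaticPolynomial :=
  (isChromPoly_chromaticPolynomial.sub_of_adj hadj
    isChromPoly_chromaticPolynomial).eq_chromaticPolynomial.symm

end ChromaticPolynomial

theorem neg_one_pow_mul_eval_chromaticPolynomial_pos [Finite V] (G : SimpleGraph V) {x : ℝ}
    (hx : x < 0) : 0 < (-1) ^ Nat.card V * G.chromaticPolynomial.eval x := by
  refine deleteEdges_identify_induction
    (motive := fun V _ G => 0 < (-1) ^ Nat.card V * G.chromaticPolynomial.eval x) ?_ ?_ V G
  · intro V _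
    rw [chromaticPolynomial_bot, eval_pow, eval_X, ← mul_pow]
    exact pow_pos (by linarith) _
  · intro V _ G u v hadj hD hM
    rw [chromaticPolynomial_eq_sub hadj, eval_sub, ← card_compl_singleton_add_one v, pow_succ]
    rw [← card_compl_singleton_add_one v, pow_succ] at hD
    linarith

noncomputable def chromaticLogDeriv [Finite V] (G : SimpleGraph V) (x : ℝ) : ℝ :=
  (derivative G.chromaticPolynomial).eval x / G.chromaticPolynomial.eval x

section LogDeriv

variable [Finite V] {G : SimpleGraph V}

lemma chromaticLogDeriv_of_isTree (hT : G.IsTree) {x : ℝ} (hx0 : x ≠ 0) (hx1 : x ≠ 1) :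
    G.chromaticLogDeriv x = treeLogDeriv (Nat.card V) x := by
  have hV := card_compl_singleton_add_one hT.1.nonempty.some
  rw [chromaticLogDeriv, chromaticPolynomial_of_isTree hT,
    eval_derivative_div_eval_X_mul_X_sub_one_pow _ hx0 hx1, treeLogDeriv, ← hV]
  push_cast
  ring

theorem treeLogDeriv_lt_chromaticLogDeriv_of_adj {u v : V} (hadj : G.Adj u v) {x : ℝ}
    (hx : x < 0)
    (hD : treeLogDeriv (Nat.card V) x ≤ (G.deleteEdges {s(u, v)}).chromaticLogDeriv x)
    (hM : treeLogDeriv (Nat.card ({v}ᶜ : Set V)) x ≤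
      ((G.deleteEdges {s(u, v)}).identify hadj.ne).chromaticLogDeriv x) :
    treeLogDeriv (Nat.card V) x < G.chromaticLogDeriv x := by
  have hsignD := neg_one_pow_mul_eval_chromaticPolynomial_pos (G.deleteEdges {s(u, v)}) hx
  have hsignM :=
    neg_one_pow_mul_eval_chromaticPolynomial_pos ((G.deleteEdges {s(u, v)}).identify hadj.ne) hx
  rw [← card_compl_singleton_add_one v] at hsignD hD ⊢
  rw [chromaticLogDeriv, chromaticPolynomial_eq_sub hadj, derivative_sub, eval_sub, eval_sub]
  refine lt_sub_div_sub_of_mul_neg ?_ hD ((treeLogDeriv_succ_lt _ (by linarith)).trans_le hM)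
  set m := Nat.card ({v}ᶜ : Set V)
  set A := (G.deleteEdges {s(u, v)}).chromaticPolynomial.eval x
  set B := ((G.deleteEdges {s(u, v)}).identify hadj.ne).chromaticPolynomial.eval x
  have hsq : ((-1 : ℝ) ^ m) ^ 2 = 1 := by rw [← pow_mul, pow_mul']; norm_num
  have hprod : (-1) ^ (m + 1) * A * ((-1) ^ m * B) = -(A * B) := by
    linear_combination (-(A * B)) * hsq
  linarith [mul_pos hsignD hsignM]

theorem treeLogDeriv_le_chromaticLogDeriv {x : ℝ} (hx : x < 0) (hG : G.Connected) :
    treeLogDeriv (Nat.card V) x ≤ G.chromaticLogDeriv x := by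
  induction hm : G.edgeSet.ncard using Nat.strong_induction_on generalizing V with
  | _ m ih =>
    by_cases hacyc : G.IsAcyclic
    · exact (chromaticLogDeriv_of_isTree ⟨hG, hacyc⟩ hx.ne (by linarith)).ge
    obtain ⟨u, v, hadj, hbr⟩ := exists_adj_not_isBridge_of_not_isAcyclic hacyc
    have hDconn := hG.connected_delete_edge_of_not_isBridge hbr
    have hD := hm ▸ ncard_edgeSet_deleteEdges_lt hadj
    exact (treeLogDeriv_lt_chromaticLogDeriv_of_adj hadj hx (ih _ hD hDconn rfl)
      (ih _ ((ncard_edgeSet_map_le _ _).trans_lt hD) (hDconn.identify hadj.ne (by simp)) rfl)).le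

end LogDeriv

end SimpleGraph

theorem stmt7 {V : Type*} [Fintype V] (G : SimpleGraph V)
    (hconn : G.Connected) (hnt : ¬ G.IsAcyclic)
    (P : Polynomial ℝ) (hP : IsChromPoly G P) (x : ℝ) (hx : x < 0) :
    1 / x + ((Fintype.card V : ℝ) - 1) / (x - 1) <
      (Polynomial.derivative P).eval x / P.eval x := by
  obtain ⟨u, v, hadj, hbr⟩ := SimpleGraph.exists_adj_not_isBridge_of_not_isAcyclic hnt
  have hD := hconn.connected_delete_edge_of_not_isBridge hbr
  rw [hP.eq_chromaticPolynomial, ← Nat.card_eq_fintype_card]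
  exact SimpleGraph.treeLogDeriv_lt_chromaticLogDeriv_of_adj hadj hx
    (SimpleGraph.treeLogDeriv_le_chromaticLogDeriv hx hD)
    (SimpleGraph.treeLogDeriv_le_chromaticLogDeriv hx (hD.identify hadj.ne (by simp)))
end

section
/- For any simple graph G of order n, (−1)^n P(G, −1) equals the number of acyclic orientations of G. -/
open Polynomial

/-- D is an acyclic orientation of G: every arc of D is an edge of G,
every edge of G gets exactly one direction, and there is no directed cycle. -/
def IsAcyclicOrientation {W : Type*} (G : SimpleGraph W) (D : W → W → Prop) : Prop :=
  (∀ a b, D a b → G.Adj a b) ∧ (∀ a b, G.Adj a b → (D a b ↔ ¬ D b a)) ∧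
    ∀ a, ¬ Relation.TransGen D a a

/-!
Both sides of the identity satisfy deletion–contraction along an edge `e = uv`.
Colourings of `G - e` are those of `G` plus those giving `u` and `v` the same colour, which are
the colourings of `G / e`; so `P(G) = P(G - e) - P(G / e)`, and as `G / e` has one vertex fewer,
`(-1)^n P(G, -1) = (-1)^n P(G - e, -1) + (-1)^(n-1) P(G / e, -1)`.
An acyclic orientation of `G - e` extends to `G` by orienting `e` as `u → v` unless it has a path
`v ⇝ u`, and as `v → u` unless it has a path `u ⇝ v`; at least one of these is possible. The
orientations admitting both are exactly those with no path between `u` and `v`, and contracting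
`e` maps them bijectively onto the acyclic orientations of `G / e`: a cycle through the merged
vertex would come from a path `u ⇝ v`, a path `v ⇝ u`, or a cycle of `G - e`. Induction on the
number of vertices and then of edges ends at edgeless graphs, where `P = x^n` and the empty
orientation is the only one.
-/

namespace Relation

variable {α β : Type*} {r : α → α → Prop} {u v : α}

theorem transGen_or_of_transGen_or_arc {a b : α}
    (h : TransGen (fun x y => r x y ∨ x = u ∧ y = v) a b) :
    TransGen r a b ∨ ReflTransGen r a u ∧ ReflTransGen r v b := by
  induction h with
  | single h =>
    rcases h with h | ⟨rfl, rfl⟩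
    exacts [.inl (.single h), .inr ⟨.refl, .refl⟩]
  | tail _ h ih =>
    rcases h with h | ⟨rfl, rfl⟩ <;> rcases ih with ih | ⟨h₁, h₂⟩
    exacts [.inl (ih.tail h), .inr ⟨h₁, h₂.tail h⟩, .inr ⟨ih.to_reflTransGen, .refl⟩,
      .inr ⟨h₁, .refl⟩]

theorem not_transGen_or_arc (hne : u ≠ v) (hr : ∀ a, ¬ TransGen r a a)
    (hvu : ¬ TransGen r v u) (a : α) : ¬ TransGen (fun x y => r x y ∨ x = u ∧ y = v) a a := by
  intro h
  rcases transGen_or_of_transGen_or_arc h with h | ⟨h₁, h₂⟩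
  · exact hr a h
  · rcases reflTransGen_iff_eq_or_transGen.1 (h₂.trans h₁) with h | h
    exacts [hne h, hvu h]

theorem not_transGen_map_of_merge {φ : α → β}
    (hφ : ∀ x y, φ x = φ y → x = y ∨ s(x, y) = s(u, v)) (hr : ∀ a, ¬ TransGen r a a)
    (huv : ¬ TransGen r u v) (hvu : ¬ TransGen r v u) (b : β) :
    ¬ TransGen (Relation.Map r φ φ) b b := by
  -- a path of the image lifts to an `r`-path that jumps at most once between `u` and `v`
  let B x z := TransGen r x z ∨ TransGen r x u ∧ ReflTransGen r v z ∨
    TransGen r x v ∧ ReflTransGen r u z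
  have lift {a b : β} (h : TransGen (Relation.Map r φ φ) a b) :
      ∃ x z, φ x = a ∧ φ z = b ∧ B x z := by
    induction h with
    | single h =>
      obtain ⟨x, z, h, rfl, rfl⟩ := h
      exact ⟨x, z, rfl, rfl, .inl (.single h)⟩
    | tail _ h ih =>
      obtain ⟨x, y, rfl, hy, hB⟩ := ih
      obtain ⟨y', z, h, hy', rfl⟩ := h
      refine ⟨x, z, rfl, rfl, ?_⟩
      rcases hφ y' y (hy'.trans hy.symm) with rfl | hyy
      · rcases hB with hB | ⟨h₁, h₂⟩ | ⟨h₁, h₂⟩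
        exacts [.inl (hB.tail h), .inr (.inl ⟨h₁, h₂.tail h⟩), .inr (.inr ⟨h₁, h₂.tail h⟩)]
      rcases Sym2.eq_iff.1 hyy with ⟨rfl, rfl⟩ | ⟨rfl, rfl⟩
      · rcases hB with hB | ⟨h₁, -⟩ | ⟨h₁, -⟩
        exacts [.inr (.inr ⟨hB, .single h⟩), .inl (h₁.tail h), .inr (.inr ⟨h₁, .single h⟩)]
      · rcases hB with hB | ⟨h₁, -⟩ | ⟨h₁, -⟩
        exacts [.inr (.inl ⟨hB, .single h⟩), .inr (.inl ⟨h₁, .single h⟩), .inl (h₁.tail h)]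
  intro h
  obtain ⟨x, z, hx, hz, hB⟩ := lift h
  rcases hφ x z (hx.trans hz.symm) with rfl | hxz
  · rcases hB with hB | ⟨h₁, h₂⟩ | ⟨h₁, h₂⟩
    exacts [hr x hB, hvu (TransGen.trans_right h₂ h₁), huv (TransGen.trans_right h₂ h₁)]
  rcases Sym2.eq_iff.1 hxz with ⟨rfl, rfl⟩ | ⟨rfl, rfl⟩
  · rcases hB with hB | ⟨h₁, -⟩ | ⟨h₁, -⟩
    exacts [huv hB, hr x h₁, huv h₁]
  · rcases hB with hB | ⟨h₁, -⟩ | ⟨h₁, -⟩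
    exacts [hvu hB, hvu h₁, hr x h₁]

end Relation

theorem Nat.card_subtype_add_card_subtype_of_or {α : Type*} [Finite α] {p q : α → Prop}
    (h : ∀ x, p x ∨ q x) :
    Nat.card {x // p x} + Nat.card {x // q x} = Nat.card α + Nat.card {x // p x ∧ q x} := by
  have := Set.ncard_union_add_ncard_inter {x | p x} {x | q x}
  rw [show {x | p x} ∪ {x | q x} = Set.univ from Set.eq_univ_of_forall h, Set.ncard_univ] at this
  exact this.symm

theorem Nat.card_subtype_add_card_subtype_not {α : Type*} [Finite α] (p : α → Prop) :
    Nat.card {x // p x} + Nat.card {x // ¬ p x} = Nat.card α := by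
  classical
  rw [← Nat.card_sum]
  exact Nat.card_congr (Equiv.sumCompl p)

theorem Nat.card_subtype_ne_add_one {α : Type*} [Finite α] (a : α) :
    Nat.card {x // x ≠ a} + 1 = Nat.card α := by
  rw [← Nat.card_subtype_add_card_subtype_not (· = a), add_comm]
  simp

open Relation

section

variable {V W : Type*}

abbrev AcyclicOrientation (G : SimpleGraph V) : Type _ :=
  {D : V → V → Prop // IsAcyclicOrientation G D}

namespace IsAcyclicOrientation

variable {G H : SimpleGraph V} {D : V → V → Prop} {u v a b : V}

theorem adj (hD : IsAcyclicOrientation G D) (h : D a b) : G.Adj a b := hD.1 a b h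

theorem asymm (hD : IsAcyclicOrientation G D) (h : D a b) : ¬ D b a :=
  (hD.2.1 a b (hD.adj h)).1 h

theorem total (hD : IsAcyclicOrientation G D) (h : G.Adj a b) : D a b ∨ D b a :=
  or_iff_not_imp_right.2 (hD.2.1 a b h).2

theorem acyclic (hD : IsAcyclicOrientation G D) (a : V) : ¬ TransGen D a a := hD.2.2 a

theorem of_total (hadj : ∀ a b, D a b → G.Adj a b) (htot : ∀ a b, G.Adj a b → D a b ∨ D b a)
    (hacyc : ∀ a, ¬ TransGen D a a) : IsAcyclicOrientation G D :=
  ⟨hadj, fun a b h => ⟨fun hab hba => hacyc a (.head hab (.single hba)),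
    (htot a b h).resolve_right⟩, hacyc⟩

theorem restrict (hD : IsAcyclicOrientation G D) (hHG : H ≤ G) :
    IsAcyclicOrientation H (fun a b => D a b ∧ H.Adj a b) :=
  of_total (fun _ _ h => h.2)
    (fun _ _ h => (hD.total (hHG h)).imp (⟨·, h⟩) (⟨·, h.symm⟩))
    fun a h => hD.acyclic a (TransGen.mono (fun _ _ => And.left) _ _ h)

theorem insertArc (hD : IsAcyclicOrientation (G.deleteEdges {s(u, v)}) D) (huv : G.Adj u v)
    (hvu : ¬ TransGen D v u) : IsAcyclicOrientation G (fun a b => D a b ∨ a = u ∧ b = v) := by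
  refine of_total ?_ (fun a b h => ?_) (not_transGen_or_arc huv.ne hD.acyclic hvu)
  · rintro a b (h | ⟨rfl, rfl⟩)
    exacts [(SimpleGraph.deleteEdges_adj.1 (hD.adj h)).1, huv]
  by_cases hab : s(a, b) = s(u, v)
  · rcases Sym2.eq_iff.1 hab with ⟨rfl, rfl⟩ | ⟨rfl, rfl⟩
    exacts [.inl (.inr ⟨rfl, rfl⟩), .inr (.inr ⟨rfl, rfl⟩)]
  · exact (hD.total (SimpleGraph.deleteEdges_adj.2 ⟨h, hab⟩)).imp .inl .inl

variable {φ : V → W}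

theorem map (hD : IsAcyclicOrientation H D) (hφ : ∀ x y, φ x = φ y ↔ x = y ∨ s(x, y) = s(u, v))
    (hHφ : ∀ x y, H.Adj x y → φ x ≠ φ y) (huv : ¬ TransGen D u v) (hvu : ¬ TransGen D v u) :
    IsAcyclicOrientation (H.map φ) (Relation.Map D φ φ) := by
  refine of_total ?_ ?_ (not_transGen_map_of_merge (fun x y => (hφ x y).1) hD.acyclic huv hvu)
  · rintro _ _ ⟨x, y, h, rfl, rfl⟩
    exact SimpleGraph.map_adj_apply' (hD.adj h) (hHφ x y (hD.adj h))
  · rintro _ _ ⟨-, x, y, h, rfl, rfl⟩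
    exact (hD.total h).imp (⟨x, y, ·, rfl, rfl⟩) (⟨y, x, ·, rfl, rfl⟩)

theorem comap {D : W → W → Prop} (hD : IsAcyclicOrientation (H.map φ) D)
    (hHφ : ∀ x y, H.Adj x y → φ x ≠ φ y) :
    IsAcyclicOrientation H (fun x y => H.Adj x y ∧ D (φ x) (φ y)) :=
  of_total (fun _ _ h => h.1)
    (fun x y h => (hD.total (SimpleGraph.map_adj_apply' h (hHφ x y h))).imp (⟨h, ·⟩)
      (⟨h.symm, ·⟩))
    fun x h => hD.acyclic (φ x) (TransGen.lift φ (fun _ _ => And.right) _ _ h)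

end IsAcyclicOrientation

theorem AcyclicOrientation.ext_of_le {G : SimpleGraph V} {D D' : AcyclicOrientation G}
    (h : ∀ a b, D.1 a b → D'.1 a b) : D = D' := by
  refine Subtype.ext (funext₂ fun a b => propext ⟨h a b, fun h' => ?_⟩)
  exact (D.2.total (D'.2.adj h')).resolve_right fun hba => D'.2.asymm h' (h b a hba)

variable {G H : SimpleGraph V} {u v : V}

theorem card_acyclicOrientation_arc (huv : G.Adj u v) :
    Nat.card {D : AcyclicOrientation G // D.1 u v} =
      Nat.card {D : AcyclicOrientation (G.deleteEdges {s(u, v)}) // ¬ TransGen D.1 v u} :=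
  Nat.card_congr {
    toFun D := ⟨⟨_, D.1.2.restrict (G.deleteEdges_le _)⟩, fun h =>
      D.1.2.acyclic u (.head D.2 (TransGen.mono (fun _ _ => And.left) _ _ h))⟩
    invFun D := ⟨⟨_, D.1.2.insertArc huv D.2⟩, .inr ⟨rfl, rfl⟩⟩
    left_inv D := Subtype.ext <| AcyclicOrientation.ext_of_le <| by
      rintro a b (⟨h, -⟩ | ⟨rfl, rfl⟩)
      exacts [h, D.2]
    right_inv D := Subtype.ext <| AcyclicOrientation.ext_of_le <| by
      rintro a b ⟨h | ⟨rfl, rfl⟩, hab⟩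
      exacts [h, absurd rfl (SimpleGraph.deleteEdges_adj.1 hab).2] }

variable {φ : V → W}

theorem card_acyclicOrientation_map (hφ : ∀ x y, φ x = φ y ↔ x = y ∨ s(x, y) = s(u, v))
    (hHφ : ∀ x y, H.Adj x y → φ x ≠ φ y) :
    Nat.card {D : AcyclicOrientation H // ¬ TransGen D.1 u v ∧ ¬ TransGen D.1 v u} =
      Nat.card (AcyclicOrientation (H.map φ)) := by
  have hφuv : φ u = φ v := (hφ u v).2 (.inr rfl)
  have hpath (D : AcyclicOrientation (H.map φ)) {x y : V} (hxy : φ x = φ y) :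
      ¬ TransGen (fun x y => H.Adj x y ∧ D.1 (φ x) (φ y)) x y := fun h => by
    have h' : TransGen D.1 (φ x) (φ y) := TransGen.lift φ (fun _ _ => And.right) _ _ h
    exact D.2.acyclic (φ y) (hxy ▸ h')
  exact Nat.card_congr {
    toFun D := ⟨_, D.1.2.map hφ hHφ D.2.1 D.2.2⟩
    invFun D := ⟨⟨_, D.2.comap hHφ⟩, hpath D hφuv, hpath D hφuv.symm⟩
    left_inv D := Subtype.ext <| Eq.symm <| AcyclicOrientation.ext_of_le fun x y h =>
      ⟨D.1.2.adj h, x, y, h, rfl, rfl⟩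
    right_inv D := AcyclicOrientation.ext_of_le <| by
      rintro _ _ ⟨x, y, ⟨-, h⟩, rfl, rfl⟩
      exact h }

theorem map_ne_of_adj_deleteEdges
    (hφ : ∀ x y, φ x = φ y ↔ x = y ∨ s(x, y) = s(u, v)) {x y : V}
    (h : (G.deleteEdges {s(u, v)}).Adj x y) : φ x ≠ φ y := by
  intro hxy
  rcases (hφ x y).1 hxy with rfl | hxy
  exacts [h.ne rfl, (SimpleGraph.deleteEdges_adj.1 h).2 hxy]

theorem card_acyclicOrientation_deletion_contraction [Finite V] (huv : G.Adj u v)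
    (hφ : ∀ x y, φ x = φ y ↔ x = y ∨ s(x, y) = s(u, v)) :
    Nat.card (AcyclicOrientation G) = Nat.card (AcyclicOrientation (G.deleteEdges {s(u, v)})) +
      Nat.card (AcyclicOrientation ((G.deleteEdges {s(u, v)}).map φ)) := by
  have hsplit : Nat.card (AcyclicOrientation G) =
      Nat.card {D : AcyclicOrientation G // D.1 v u} +
        Nat.card {D : AcyclicOrientation G // D.1 u v} := by
    rw [← Nat.card_subtype_add_card_subtype_not (fun D : AcyclicOrientation G => D.1 v u)]
    exact congrArg _ (Nat.card_congr (Equiv.subtypeEquivRight fun D =>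
      ⟨(D.2.total huv.symm).resolve_left, fun h => D.2.asymm h⟩))
  have hvu := card_acyclicOrientation_arc huv.symm
  rw [Sym2.eq_swap] at hvu
  rw [hsplit, hvu, card_acyclicOrientation_arc huv,
    Nat.card_subtype_add_card_subtype_of_or fun D => not_or_of_imp fun h₁ h₂ =>
      D.2.acyclic u (h₁.trans h₂),
    card_acyclicOrientation_map hφ fun x y => map_ne_of_adj_deleteEdges hφ]

section Coloring

variable {α : Type*}

theorem card_coloring_deleteEdges [Finite V] [Finite α] (huv : G.Adj u v) :
    Nat.card ((G.deleteEdges {s(u, v)}).Coloring α) = Nat.card (G.Coloring α) +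
      Nat.card {c : (G.deleteEdges {s(u, v)}).Coloring α // c u = c v} := by
  rw [← Nat.card_subtype_add_card_subtype_not (fun c : (G.deleteEdges {s(u, v)}).Coloring α =>
    c u = c v), add_comm]
  refine congrArg (· + _) (Nat.card_congr (Equiv.symm {
    toFun c := ⟨c.comp (.ofLE (G.deleteEdges_le _)), c.valid huv⟩
    invFun c := SimpleGraph.Coloring.mk c.1 fun {a b} h => by
      by_cases hab : s(a, b) = s(u, v)
      · rcases Sym2.eq_iff.1 hab with ⟨rfl, rfl⟩ | ⟨rfl, rfl⟩
        exacts [c.2, Ne.symm c.2]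
      · exact c.1.valid (SimpleGraph.deleteEdges_adj.2 ⟨h, hab⟩)
    left_inv _ := rfl
    right_inv _ := rfl }))

theorem card_coloring_map (hsurj : Function.Surjective φ)
    (hHφ : ∀ x y, H.Adj x y → φ x ≠ φ y) :
    Nat.card ((H.map φ).Coloring α) =
      Nat.card {c : H.Coloring α // ∀ x y, φ x = φ y → c x = c y} :=
  Nat.card_congr {
    toFun c := ⟨c.comp ⟨φ, fun h => SimpleGraph.map_adj_apply' h (hHφ _ _ h)⟩,
      fun _ _ h => congrArg c h⟩
    invFun c := SimpleGraph.Coloring.mk (c.1 ∘ Function.surjInv hsurj) fun {a b} h => by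
      obtain ⟨-, x, y, h, rfl, rfl⟩ := h
      rw [Function.comp_apply, Function.comp_apply, c.2 _ x (Function.surjInv_eq hsurj _),
        c.2 _ y (Function.surjInv_eq hsurj _)]
      exact c.1.valid h
    left_inv c := RelHom.ext fun a => congrArg c (Function.surjInv_eq hsurj a)
    right_inv c := Subtype.ext <| RelHom.ext fun x => c.2 _ _ (Function.surjInv_eq hsurj (φ x)) }

theorem card_coloring_deletion_contraction [Finite V] [Finite α] (huv : G.Adj u v)
    (hφ : ∀ x y, φ x = φ y ↔ x = y ∨ s(x, y) = s(u, v)) (hsurj : Function.Surjective φ) :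
    Nat.card ((G.deleteEdges {s(u, v)}).Coloring α) = Nat.card (G.Coloring α) +
      Nat.card (((G.deleteEdges {s(u, v)}).map φ).Coloring α) := by
  rw [card_coloring_deleteEdges huv,
    card_coloring_map hsurj fun x y => map_ne_of_adj_deleteEdges hφ]
  refine congrArg _ (Nat.card_congr (Equiv.subtypeEquivRight fun c =>
    ⟨fun h x y hxy => ?_, fun h => h u v ((hφ u v).2 (.inr rfl))⟩))
  rcases (hφ x y).1 hxy with rfl | hxy
  · rfl
  · rcases Sym2.eq_iff.1 hxy with ⟨rfl, rfl⟩ | ⟨rfl, rfl⟩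
    exacts [h, h.symm]

end Coloring

-- `G / uv` is `(G.deleteEdges {s(u, v)}).map (collapse _)`, on the vertex type `{x // x ≠ v}`.
def collapse [DecidableEq V] (hne : u ≠ v) (x : V) : {x : V // x ≠ v} :=
  if h : x = v then ⟨u, hne⟩ else ⟨x, h⟩

theorem collapse_eq_collapse_iff [DecidableEq V] (hne : u ≠ v) (x y : V) :
    collapse hne x = collapse hne y ↔ x = y ∨ s(x, y) = s(u, v) := by
  unfold collapse
  split_ifs <;> grind [Sym2.eq_iff, Subtype.ext_iff]

theorem collapse_surjective [DecidableEq V] (hne : u ≠ v) :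
    Function.Surjective (collapse hne) :=
  fun y => ⟨y, dif_neg y.2⟩

theorem isChromPoly_bot [Finite V] : IsChromPoly (⊥ : SimpleGraph V) (X ^ Nat.card V) := by
  intro k
  have e : (⊥ : SimpleGraph V).Coloring (Fin k) ≃ (V → Fin k) :=
    ⟨(⇑), (SimpleGraph.Coloring.mk · fun h => h.elim), fun _ => rfl, fun _ => rfl⟩
  rw [Nat.card_congr e, Nat.card_fun, Nat.card_fin, eval_pow, eval_X, Nat.cast_pow]

theorem card_acyclicOrientation_bot :
    Nat.card (AcyclicOrientation (⊥ : SimpleGraph V)) = 1 := by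
  have : Unique (AcyclicOrientation (⊥ : SimpleGraph V)) :=
    { default := ⟨fun _ _ => False, .of_total (fun _ _ => False.elim) (fun _ _ => False.elim)
        fun _ h => (TransGen.head'_iff.1 h).choose_spec.1⟩
      uniq D := AcyclicOrientation.ext_of_le fun _ _ h => (D.2.adj h).elim }
  exact Nat.card_unique

theorem IsChromPoly.unique_s11 {P Q : ℝ[X]} (hP : IsChromPoly G P) (hQ : IsChromPoly G Q) : P = Q :=
  eq_of_infinite_eval_eq P Q <| (Set.infinite_range_of_injective Nat.cast_injective).mono <| by
    rintro _ ⟨k, rfl⟩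
    exact (hP k).trans (hQ k).symm

theorem ncard_edgeSet_deleteEdges_lt [Finite V] (huv : G.Adj u v) :
    (G.deleteEdges {s(u, v)}).edgeSet.ncard < G.edgeSet.ncard := by
  rw [SimpleGraph.edgeSet_deleteEdges]
  exact Set.ncard_sdiff_singleton_lt_of_mem huv

theorem exists_isChromPoly_eval_neg_one {V : Type*} [Finite V] (G : SimpleGraph V) :
    ∃ P : ℝ[X], IsChromPoly G P ∧
      (-1) ^ Nat.card V * P.eval (-1) = Nat.card (AcyclicOrientation G) := by
  by_cases hG : G = ⊥
  · subst hG
    refine ⟨X ^ Nat.card V, isChromPoly_bot, ?_⟩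
    rw [card_acyclicOrientation_bot, eval_pow, eval_X, ← mul_pow]
    norm_num
  obtain ⟨u, v, huv⟩ : ∃ u v, G.Adj u v := by
    by_contra! h
    exact hG (SimpleGraph.ext (funext₂ fun a b => propext ⟨h a b, False.elim⟩))
  classical
  have hφ := collapse_eq_collapse_iff huv.ne
  obtain ⟨P, hP, hPa⟩ := exists_isChromPoly_eval_neg_one (G.deleteEdges {s(u, v)})
  obtain ⟨Q, hQ, hQa⟩ :=
    exists_isChromPoly_eval_neg_one ((G.deleteEdges {s(u, v)}).map (collapse huv.ne))
  refine ⟨P - Q, fun k => ?_, ?_⟩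
  · rw [eval_sub, hP, hQ, card_coloring_deletion_contraction huv hφ (collapse_surjective _)]
    push_cast
    ring
  · rw [card_acyclicOrientation_deletion_contraction huv hφ, Nat.cast_add, ← hPa, ← hQa,
      ← Nat.card_subtype_ne_add_one v, eval_sub]
    ring
termination_by (Nat.card V, G.edgeSet.ncard)
decreasing_by
  · exact Prod.Lex.right _ (ncard_edgeSet_deleteEdges_lt huv)
  · exact Prod.Lex.left _ _ (Nat.card_subtype_ne_add_one v ▸ Nat.lt_succ_self _)

end

theorem stmt11 {V : Type*} [Fintype V] (G : SimpleGraph V) (P : Polynomial ℝ)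
    (hP : IsChromPoly G P) :
    (-1 : ℝ) ^ (Fintype.card V) * P.eval (-1) =
      (Nat.card {D : V → V → Prop // IsAcyclicOrientation G D} : ℝ) := by
  obtain ⟨Q, hQ, hQa⟩ := exists_isChromPoly_eval_neg_one G
  rw [hP.unique_s11 hQ, ← Nat.card_eq_fintype_card]
  exact hQa
end
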